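/- A formula is a tautology if and only if it is provable in the system with axiom A ∨ ¬A ∨ B̄ and rules permutation, associativity, double negation introduction, and De Morgan. -/

import Mathlib

/-- Propositional formulas built from letters by negation and disjunction. -/
inductive Fm where
  | letter : ℕ → Fm
  | neg : Fm → Fm
  | or : Fm → Fm → Fm
deriving DecidableEq

/-- Boolean evaluation under a valuation of the letters. -/
def Fm.eval (v : ℕ → Bool) : Fm → Bool
  | .letter n => v n
  | .neg a => !(a.eval v)
  | .or a b => a.eval v || b.eval v

/-- A formula is a tautology if it is true under every valuation. -/
def Taut (A : Fm) : Prop := ∀ v : ℕ → Bool, A.eval v = true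

/-- Right-associated disjunction `A ∨ B₁ ∨ ⋯ ∨ Bₙ` (the list possibly empty). -/
def disj : Fm → List Fm → Fm
  | A, [] => A
  | A, B :: l => .or A (disj B l)

/-- Provability: axiom scheme `A ∨ ¬A ∨ B̄`, rules: permutation of disjuncts,
associativity, double negation introduction, De Morgan. -/
inductive Prov : Fm → Prop where
  | ax (A : Fm) (l : List Fm) : Prov (disj A (.neg A :: l))
  | perm (A B : Fm) (l l' : List Fm) : (A :: l).Perm (B :: l') →
      Prov (disj A l) → Prov (disj B l')
  | assoc (A B : Fm) (l : List Fm) :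
      Prov (disj A (B :: l)) → Prov (disj (.or A B) l)
  | dneg (A : Fm) (l : List Fm) :
      Prov (disj A l) → Prov (disj (.neg (.neg A)) l)
  | demorgan (A B : Fm) (l : List Fm) :
      Prov (disj (.neg A) l) → Prov (disj (.neg B) l) →
      Prov (disj (.neg (.or A B)) l)

/-!
Completeness: read `disj A l` as the sequent `A :: l`. As long as the sequent contains a formula
that is not a literal, move it to the front and undo the rule that produces it (associativity,
double negation or De Morgan); this strictly lowers the total size of the sequent and preserves
validity. A valid sequent of literals must contain a complementary pair: otherwise the valuation
making exactly the letters occurring negated true falsifies all of it.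
-/

def Valid (Γ : List Fm) : Prop := ∀ v : ℕ → Bool, Γ.any (Fm.eval v) = true

theorem Valid.perm {Γ Δ : List Fm} (h : Valid Γ) (hp : Γ.Perm Δ) : Valid Δ := fun v =>
  hp.any_eq ▸ h v

theorem eval_disj (v : ℕ → Bool) (A : Fm) (l : List Fm) :
    (disj A l).eval v = (A :: l).any (Fm.eval v) := by
  induction l generalizing A with
  | nil => simp [disj]
  | cons B l ih => simp [disj, Fm.eval, ih]

theorem taut_disj_iff (A : Fm) (l : List Fm) : Taut (disj A l) ↔ Valid (A :: l) := by
  simp only [Taut, Valid, eval_disj]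

theorem Prov.taut {F : Fm} (h : Prov F) : Taut F := by
  induction h with
  | ax A l =>
    intro v
    cases h : A.eval v <;> simp [eval_disj, Fm.eval, h]
  | perm A B l l' hp _ ih => exact (taut_disj_iff B l').2 (((taut_disj_iff A l).1 ih).perm hp)
  | assoc A B l _ ih =>
    intro v
    simpa [eval_disj, Fm.eval, Bool.or_assoc] using ih v
  | dneg A l _ ih =>
    intro v
    simpa [eval_disj, Fm.eval] using ih v
  | demorgan A B l _ _ ih₁ ih₂ =>
    intro v
    have h₁ := ih₁ v
    have h₂ := ih₂ v
    simp only [eval_disj, Fm.eval, List.any_cons, Bool.or_eq_true, Bool.not_eq_true',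
      Bool.not_or, Bool.and_eq_true] at h₁ h₂ ⊢
    tauto

theorem Prov.of_mem_of_neg_mem {P A : Fm} {l : List Fm} (hP : P ∈ A :: l)
    (hnP : .neg P ∈ A :: l) : Prov (disj A l) := by
  have hnP' : .neg P ∈ (A :: l).erase P := (List.mem_erase_of_ne fun h => by cases h).2 hnP
  have hp : (A :: l).Perm (P :: .neg P :: ((A :: l).erase P).erase (.neg P)) :=
    (List.perm_cons_erase hP).trans (.cons _ (List.perm_cons_erase hnP'))
  exact .perm _ _ _ _ hp.symm (.ax _ _)

def Fm.IsLiteral : Fm → Prop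
  | .letter _ => True
  | .neg (.letter _) => True
  | _ => False

theorem Prov.of_valid_of_forall_isLiteral {A : Fm} {l : List Fm}
    (hlit : ∀ B ∈ A :: l, B.IsLiteral) (h : Valid (A :: l)) : Prov (disj A l) := by
  classical
  obtain ⟨B, hB, hBv⟩ := List.any_eq_true.1 (h fun n => decide (.neg (.letter n) ∈ A :: l))
  match B, hlit B hB with
  | .letter _, _ =>
    exact .of_mem_of_neg_mem hB (by simpa [Fm.eval] using hBv)
  | .neg (.letter _), _ =>
    exact absurd hB (by simpa [Fm.eval] using hBv)

def Fm.size : Fm → ℕ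
  | .letter _ => 0
  | .neg a => a.size + 1
  | .or a b => a.size + b.size + 1

def weight (Γ : List Fm) : ℕ := (Γ.map Fm.size).sum

theorem weight_cons (B : Fm) (Γ : List Fm) : weight (B :: Γ) = B.size + weight Γ := by
  simp [weight]

theorem Prov.of_valid_of_not_isLiteral {B : Fm} {m : List Fm}
    (ih : ∀ A l, weight (A :: l) < weight (B :: m) → Valid (A :: l) → Prov (disj A l))
    (hB : ¬ B.IsLiteral) (h : Valid (B :: m)) : Prov (disj B m) := by
  match B, hB with
  | .letter _, hB | .neg (.letter _), hB => exact (hB trivial).elim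
  | .or P Q, _ =>
    refine .assoc _ _ _ (ih _ _ (by simp [weight_cons, Fm.size]; omega) fun v => ?_)
    simpa [Fm.eval, Bool.or_assoc] using h v
  | .neg (.neg P), _ =>
    refine .dneg _ _ (ih _ _ (by simp [weight_cons, Fm.size]) fun v => ?_)
    simpa [Fm.eval] using h v
  | .neg (.or P Q), _ =>
    refine .demorgan _ _ _ (ih _ _ (by simp [weight_cons, Fm.size]) fun v => ?_)
      (ih _ _ (by simp [weight_cons, Fm.size]) fun v => ?_) <;>
    · have hv := h v
      simp only [Fm.eval, List.any_cons, Bool.or_eq_true, Bool.not_eq_true', Bool.not_or,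
        Bool.and_eq_true] at hv ⊢
      tauto

theorem Prov.of_valid (A : Fm) (l : List Fm) (h : Valid (A :: l)) : Prov (disj A l) := by
  by_cases hlit : ∀ B ∈ A :: l, B.IsLiteral
  · exact .of_valid_of_forall_isLiteral hlit h
  obtain ⟨B, hB, hBlit⟩ := not_forall₂.1 hlit
  have hp := List.perm_cons_erase hB
  have hweight : weight (B :: (A :: l).erase B) = weight (A :: l) := (hp.map _).sum_eq.symm
  exact .perm _ _ _ _ hp.symm <| .of_valid_of_not_isLiteral
    (fun A' l' hlt h' => Prov.of_valid A' l' h') hBlit (h.perm hp)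
termination_by weight (A :: l)
decreasing_by exact hlt.trans_eq hweight

theorem taut_iff_prov (A : Fm) : Taut A ↔ Prov A :=
  ⟨fun h => .of_valid A [] ((taut_disj_iff A []).1 h), Prov.taut⟩
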